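/- arXiv:1702.06455 — 9 statements merged into one kernel-verified Lean document; each statement's English description precedes it below -/
import Mathlib

section
/- For any binary constant-weight code C of length n, constant weight w, and maximum pairwise Hamming correlation λ (i.e., any two distinct codewords share at most λ common 1-positions), if w² − nλ > 0 then |C| ≤ ⌊n(w−λ)/(w² − nλ)⌋. -/
/-!
Count incidences through the degrees `d a = #{c ∈ C | a ∈ c}` of the points. Their sum is
`#C * w`, and their sum of squares counts ordered pairs of codewords with a common point, which is
`∑ c, ∑ c', #(c ∩ c') ≤ #C * (w + (#C - 1) * λ)`. Cauchy–Schwarz, `(∑ d a)² ≤ n ∑ d a²`, then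
gives `#C * w² ≤ n * (w + (#C - 1) * λ)`, which rearranges to `#C * (w² - nλ) ≤ n * (w - λ)`.
-/

open Finset

theorem Nat.mul_sub_le_of_mul_sq_le {n w lam M : ℕ} (hwn : w ≤ n)
    (h : M * w ^ 2 ≤ n * (w + (M - 1) * lam)) :
    M * (w ^ 2 - n * lam) ≤ n * (w - lam) := by
  cases M with
  | zero => simp
  | succ k =>
    rw [Nat.add_sub_cancel] at h
    rcases le_or_gt (w ^ 2) (n * lam) with hle | hlt
    · simp [Nat.sub_eq_zero_of_le hle]
    have hlam : lam ≤ w := by nlinarith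
    zify [hlt.le, hlam] at h ⊢
    nlinarith

namespace Finset

variable {α : Type*} [DecidableEq α] {C : Finset (Finset α)} {w lam : ℕ}

theorem sum_card_filter_mem_eq_sum_card [Fintype α] (C : Finset (Finset α)) :
    ∑ a, #{c ∈ C | a ∈ c} = ∑ c ∈ C, #c := by
  simp_rw [card_eq_sum_ones, sum_filter]
  rw [sum_comm]
  simp

theorem sum_card_filter_mem_sq [Fintype α] (C : Finset (Finset α)) :
    ∑ a, #{c ∈ C | a ∈ c} ^ 2 = ∑ c ∈ C, ∑ c' ∈ C, #(c ∩ c') := by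
  have card_inter (c c' : Finset α) :
      #(c ∩ c') = ∑ a, if a ∈ c then if a ∈ c' then 1 else 0 else 0 := by
    rw [← sum_filter, ← sum_filter, filter_filter, card_eq_sum_ones]
    congr 1
    ext
    simp
  simp_rw [card_inter, card_filter, sq, sum_mul_sum, ite_zero_mul_ite_zero, mul_one]
  rw [sum_comm]
  refine sum_congr rfl fun c _ ↦ ?_
  rw [sum_comm]
  simp [ite_and]

theorem sum_card_inter_le_of_card_inter_le (hw : ∀ c ∈ C, #c = w)
    (hcorr : ∀ c ∈ C, ∀ c' ∈ C, c ≠ c' → #(c ∩ c') ≤ lam) {c : Finset α} (hc : c ∈ C) :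
    ∑ c' ∈ C, #(c ∩ c') ≤ w + (#C - 1) * lam := by
  rw [← add_sum_erase _ _ hc, inter_self, hw c hc, ← card_erase_of_mem hc, ← smul_eq_mul]
  gcongr
  exact sum_le_card_nsmul _ _ _ fun c' hc' ↦
    hcorr c hc c' (mem_of_mem_erase hc') (ne_of_mem_erase hc').symm

theorem card_mul_sq_le_of_card_inter_le [Fintype α] (hw : ∀ c ∈ C, #c = w)
    (hcorr : ∀ c ∈ C, ∀ c' ∈ C, c ≠ c' → #(c ∩ c') ≤ lam) :
    #C * w ^ 2 ≤ Fintype.card α * (w + (#C - 1) * lam) := by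
  rcases C.eq_empty_or_nonempty with rfl | hC
  · simp
  refine Nat.le_of_mul_le_mul_left ?_ hC.card_pos
  calc #C * (#C * w ^ 2) = (∑ a, #{c ∈ C | a ∈ c}) ^ 2 := by
        rw [sum_card_filter_mem_eq_sum_card, sum_congr rfl hw, sum_const, smul_eq_mul]
        ring
    _ ≤ Fintype.card α * ∑ a, #{c ∈ C | a ∈ c} ^ 2 := sq_sum_le_card_mul_sum_sq
    _ = Fintype.card α * ∑ c ∈ C, ∑ c' ∈ C, #(c ∩ c') := by rw [sum_card_filter_mem_sq]
    _ ≤ Fintype.card α * ∑ _c ∈ C, (w + (#C - 1) * lam) := by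
        gcongr with c hc
        exact sum_card_inter_le_of_card_inter_le hw hcorr hc
    _ = #C * (Fintype.card α * (w + (#C - 1) * lam)) := by
        rw [sum_const, smul_eq_mul]
        ring

theorem card_mul_sub_le_of_card_inter_le [Fintype α] (hw : ∀ c ∈ C, #c = w)
    (hcorr : ∀ c ∈ C, ∀ c' ∈ C, c ≠ c' → #(c ∩ c') ≤ lam) :
    #C * (w ^ 2 - Fintype.card α * lam) ≤ Fintype.card α * (w - lam) := by
  rcases C.eq_empty_or_nonempty with rfl | ⟨c, hc⟩
  · simp
  have hw_le : w ≤ Fintype.card α := hw c hc ▸ card_le_univ c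
  exact Nat.mul_sub_le_of_mul_sq_le hw_le (card_mul_sq_le_of_card_inter_le hw hcorr)

end Finset

/-- Johnson bound: for a binary constant-weight code of length `n`, weight `w`, and
maximum pairwise Hamming correlation `λ`, if `w² − nλ > 0` then
`|C| ≤ ⌊n(w−λ)/(w² − nλ)⌋`. -/
theorem stmt_3 (n w lam : ℕ) (C : Finset (Finset (Fin n)))
    (hw : ∀ c ∈ C, c.card = w)
    (hcorr : ∀ c ∈ C, ∀ c' ∈ C, c ≠ c' → (c ∩ c').card ≤ lam)
    (h : n * lam < w ^ 2) :
    C.card ≤ n * (w - lam) / (w ^ 2 - n * lam) := by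
  rw [Nat.le_div_iff_mul_le (Nat.sub_pos_of_lt h)]
  simpa using card_mul_sub_le_of_card_inter_le hw hcorr
end

section
/- For any binary constant-weight code of length n, weight w, and maximum pairwise correlation λ, if 0 < w² − nλ ≤ w − λ then the code has at most n codewords. -/
open Finset

/-- Splitting argument: vectors with pairwise negative inner products, all having negative
inner product with an extra vector `v₀`, admit only the trivial linear relation. -/
lemma aux_neg_indep {n : ℕ} {ι : Type*} [Fintype ι]
    (v : ι → Fin n → ℚ) (v₀ : Fin n → ℚ)
    (hneg : ∀ a b : ι, a ≠ b → ∑ i, v a i * v b i < 0)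
    (hneg0 : ∀ a : ι, ∑ i, v a i * v₀ i < 0)
    (g : ι → ℚ) (hg : ∀ i, ∑ c, g c * v c i = 0) : ∀ c, g c = 0 := by
  classical
  set P := Finset.univ.filter fun c => 0 < g c with hP
  set N := Finset.univ.filter fun c => g c < 0 with hN
  set u : Fin n → ℚ := fun i => ∑ c ∈ P, g c * v c i with hu
  have hsplit : ∀ i, u i + ∑ c ∈ N, g c * v c i = 0 := by
    intro i
    rw [← hg i, ← Finset.sum_filter_add_sum_filter_not Finset.univ (fun c => 0 < g c)
      (fun c => g c * v c i)]
    congr 1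
    refine Finset.sum_subset ?_ ?_
    · intro c hc
      simp only [hN, Finset.mem_filter, Finset.mem_univ, true_and] at hc ⊢
      exact not_lt.mpr hc.le
    · intro c hc hcn
      simp only [hN, Finset.mem_filter, Finset.mem_univ, true_and, not_lt] at hc hcn
      have : g c = 0 := le_antisymm hc hcn
      simp [this]
  -- inner product of v c with u
  have hdotu : ∀ c : ι, ∑ i, v c i * u i = ∑ a ∈ P, g a * ∑ i, v c i * v a i := by
    intro c
    simp only [hu, Finset.mul_sum]
    rw [Finset.sum_comm]
    refine Finset.sum_congr rfl fun a _ => ?_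
    refine Finset.sum_congr rfl fun i _ => by ring
  have hNu : ∀ i, ∑ c ∈ N, g c * v c i = -u i := by
    intro i; linarith [hsplit i]
  have huu : ∑ i, u i * u i ≤ 0 := by
    have : ∑ i, u i * u i = -∑ c ∈ N, g c * ∑ a ∈ P, g a * ∑ i, v c i * v a i := by
      calc ∑ i, u i * u i = -∑ i, (∑ c ∈ N, g c * v c i) * u i := by
            rw [← Finset.sum_neg_distrib]
            refine Finset.sum_congr rfl fun i _ => ?_
            rw [hNu i]; ring
        _ = -∑ c ∈ N, g c * ∑ i, v c i * u i := by
            congr 1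
            simp only [Finset.sum_mul, Finset.mul_sum]
            rw [Finset.sum_comm]
            exact Finset.sum_congr rfl fun c _ => Finset.sum_congr rfl fun i _ => by ring
        _ = -∑ c ∈ N, g c * ∑ a ∈ P, g a * ∑ i, v c i * v a i := by
            congr 1
            exact Finset.sum_congr rfl fun c _ => by rw [hdotu c]
    rw [this, neg_nonpos]
    refine Finset.sum_nonneg fun c hc => ?_
    simp only [hN, Finset.mem_filter, Finset.mem_univ, true_and] at hc
    have h1 : ∑ a ∈ P, g a * ∑ i, v c i * v a i ≤ 0 := by
      refine Finset.sum_nonpos fun a ha => ?_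
      simp only [hP, Finset.mem_filter, Finset.mem_univ, true_and] at ha
      have hac : c ≠ a := by rintro rfl; exact absurd ha (not_lt.mpr hc.le)
      exact mul_nonpos_of_nonneg_of_nonpos ha.le (hneg c a hac).le
    nlinarith [mul_nonneg (neg_nonneg.2 hc.le) (neg_nonneg.2 h1)]
  have hu0 : ∀ i, u i = 0 := by
    have h0 : ∑ i, u i * u i = 0 :=
      le_antisymm huu (Finset.sum_nonneg fun i _ => mul_self_nonneg _)
    intro i
    have := (Finset.sum_eq_zero_iff_of_nonneg (fun i _ => mul_self_nonneg (u i))).mp h0 i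
      (Finset.mem_univ i)
    exact mul_self_eq_zero.mp this
  have hPe : P = ∅ := by
    by_contra hne
    have hne' : P.Nonempty := Finset.nonempty_of_ne_empty hne
    have hsum : ∑ c ∈ P, g c * ∑ i, v c i * v₀ i = 0 := by
      have : ∑ c ∈ P, g c * ∑ i, v c i * v₀ i = ∑ i, u i * v₀ i := by
        simp only [hu, Finset.sum_mul, Finset.mul_sum]
        rw [Finset.sum_comm]
        exact Finset.sum_congr rfl fun i _ => Finset.sum_congr rfl fun c _ => by ring
      rw [this]
      simp [fun i => hu0 i]
    have : ∑ c ∈ P, g c * ∑ i, v c i * v₀ i < 0 := by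
      have := Finset.sum_lt_sum_of_nonempty hne' (g := fun _ => (0:ℚ))
        (fun c hc => by
          simp only [hP, Finset.mem_filter, Finset.mem_univ, true_and] at hc
          exact mul_neg_of_pos_of_neg hc (hneg0 c))
      simpa using this
    linarith
  have hNe : N = ∅ := by
    by_contra hne
    have hne' : N.Nonempty := Finset.nonempty_of_ne_empty hne
    have hsum : ∑ c ∈ N, g c * ∑ i, v c i * v₀ i = 0 := by
      have : ∑ c ∈ N, g c * ∑ i, v c i * v₀ i = ∑ i, (∑ c ∈ N, g c * v c i) * v₀ i := by
        simp only [Finset.sum_mul, Finset.mul_sum]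
        rw [Finset.sum_comm]
        exact Finset.sum_congr rfl fun i _ => Finset.sum_congr rfl fun c _ => by ring
      rw [this]
      have : ∀ i, (∑ c ∈ N, g c * v c i) * v₀ i = 0 := fun i => by
        rw [hNu i, hu0 i]; ring
      simp [this]
    have : 0 < ∑ c ∈ N, g c * ∑ i, v c i * v₀ i := by
      have := Finset.sum_lt_sum_of_nonempty hne' (f := fun _ => (0:ℚ))
        (g := fun c => g c * ∑ i, v c i * v₀ i)
        (fun c hc => by
          simp only [hN, Finset.mem_filter, Finset.mem_univ, true_and] at hc
          exact mul_pos_of_neg_of_neg hc (hneg0 c))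
      simpa using this
    linarith
  intro c
  by_contra hc
  rcases lt_or_gt_of_ne hc with h | h
  · have : c ∈ N := by simp [hN, h]
    rw [hNe] at this; exact absurd this (Finset.notMem_empty c)
  · have : c ∈ P := by simp [hP, h]
    rw [hPe] at this; exact absurd this (Finset.notMem_empty c)

/-- Agrell–Vardy–Zeger bound: for a binary constant-weight code of length `n`, weight `w`,
and maximum pairwise correlation `λ`, if `0 < w² − nλ ≤ w − λ` then the code has at most
`n` codewords. -/
theorem stmt_4 (n w lam : ℕ) (C : Finset (Finset (Fin n)))
    (hw : ∀ c ∈ C, c.card = w)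
    (hcorr : ∀ c ∈ C, ∀ c' ∈ C, c ≠ c' → (c ∩ c').card ≤ lam)
    (h1 : 0 < (w : ℤ) ^ 2 - n * lam)
    (h2 : (w : ℤ) ^ 2 - n * lam ≤ w - lam) :
    C.card ≤ n := by
  classical
  rcases C.eq_empty_or_nonempty with rfl | ⟨c₀, hc₀⟩
  · simp
  have hw0 : c₀.card = w := hw c₀ hc₀
  have hwn : w ≤ n := by
    have := Finset.card_le_card (Finset.subset_univ c₀)
    simpa [hw0] using this
  have hwpos : 0 < w := by
    by_contra h
    have : w = 0 := by omega
    subst this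
    have : (0:ℤ) ≤ (n:ℤ) * lam := by positivity
    simp at h1; omega
  have hnpos : 0 < n := lt_of_lt_of_le hwpos hwn
  have hQ : (n:ℚ) * lam < (w:ℚ) ^ 2 := by
    have : (n:ℤ) * lam < (w:ℤ) ^ 2 := by linarith
    exact_mod_cast this
  set z : Finset (Fin n) → Fin n → ℚ := fun c i => n * (if i ∈ c then 1 else 0) - w with hzdef
  have hind : ∀ c : Finset (Fin n), ∑ i, (if i ∈ c then (1:ℚ) else 0) = (c.card : ℚ) := by
    intro c
    rw [Finset.sum_ite_mem]
    simp
  have hprod : ∀ a b : Finset (Fin n),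
      ∑ i, (if i ∈ a then (1:ℚ) else 0) * (if i ∈ b then 1 else 0) = ((a ∩ b).card : ℚ) := by
    intro a b
    have hpt : ∀ i, (if i ∈ a then (1:ℚ) else 0) * (if i ∈ b then 1 else 0)
        = if i ∈ a ∩ b then 1 else 0 := by
      intro i
      by_cases ha : i ∈ a <;> by_cases hb : i ∈ b <;> simp [ha, hb]
    rw [Finset.sum_congr rfl fun i _ => hpt i, Finset.sum_ite_mem]
    simp
  have hsum1 : ∀ c ∈ C, ∑ i, z c i = 0 := by
    intro c hc
    simp only [hzdef]
    rw [Finset.sum_sub_distrib, ← Finset.mul_sum, hind c, hw c hc]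
    simp [mul_comm]
  have hdot : ∀ a ∈ C, ∀ b ∈ C, a ≠ b → ∑ i, z a i * z b i < 0 := by
    intro a ha b hb hab
    have hexp : ∑ i, z a i * z b i = (n:ℚ)^2 * ((a ∩ b).card) - n * w^2 := by
      simp only [hzdef]
      have e : ∀ i : Fin n, ((n:ℚ) * (if i ∈ a then 1 else 0) - w) *
          ((n:ℚ) * (if i ∈ b then 1 else 0) - w)
          = (n:ℚ)^2 * ((if i ∈ a then 1 else 0) * (if i ∈ b then 1 else 0))
            - n * w * (if i ∈ a then 1 else 0) - n * w * (if i ∈ b then 1 else 0) + w^2 := by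
        intro i; ring
      rw [Finset.sum_congr rfl fun i _ => e i]
      rw [Finset.sum_add_distrib, Finset.sum_sub_distrib, Finset.sum_sub_distrib,
        ← Finset.mul_sum, ← Finset.mul_sum, ← Finset.mul_sum, hprod a b, hind a, hind b,
        hw a ha, hw b hb]
      simp [Finset.sum_const, Finset.card_univ]
      ring
    rw [hexp]
    have hI : ((a ∩ b).card : ℚ) ≤ (lam : ℚ) := by
      exact_mod_cast hcorr a ha b hb hab
    have hn1 : (1:ℚ) ≤ (n:ℚ) := by exact_mod_cast hnpos
    nlinarith
  -- the shifted indicator vectors of `C.erase c₀`, together with `1`, are linearly independent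
  set ι := {c : Finset (Fin n) // c ∈ C.erase c₀} with hι
  set V : Option ι → Fin n → ℚ := fun o => Option.rec (fun _ => 1) (fun c => z c.1) o with hV
  have hmemC : ∀ c : ι, c.1 ∈ C := fun c => Finset.mem_of_mem_erase c.2
  have hne0 : ∀ c : ι, c.1 ≠ c₀ := fun c => Finset.ne_of_mem_erase c.2
  have hli : LinearIndependent ℚ V := by
    rw [Fintype.linearIndependent_iff]
    intro g hgV
    have hpt : ∀ i, g none * 1 + ∑ c : ι, g (some c) * z c.1 i = 0 := by
      intro i
      have := congrFun hgV i
      simpa [hV, Fintype.sum_option, Finset.sum_apply] using this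
    have hnone : g none = 0 := by
      have hs : ∑ i : Fin n, (g none * 1 + ∑ c : ι, g (some c) * z c.1 i) = 0 := by
        rw [Finset.sum_congr rfl fun i _ => hpt i]; simp
      rw [Finset.sum_add_distrib, Finset.sum_const, Finset.card_univ, Fintype.card_fin,
        Finset.sum_comm] at hs
      have hz2 : ∀ c : ι, ∑ i : Fin n, g (some c) * z c.1 i = 0 := by
        intro c
        rw [← Finset.mul_sum, hsum1 c.1 (hmemC c), mul_zero]
      rw [Finset.sum_congr rfl fun c _ => hz2 c] at hs
      simp at hs
      rcases hs with hs | hs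
      · omega
      · exact hs
    have hz0 : ∀ i, ∑ c : ι, g (some c) * z c.1 i = 0 := by
      intro i; have := hpt i; rw [hnone] at this; linarith
    have hmain := aux_neg_indep (fun c : ι => z c.1) (z c₀)
      (fun a b hab => hdot a.1 (hmemC a) b.1 (hmemC b)
        (fun h => hab (Subtype.ext h)))
      (fun a => hdot a.1 (hmemC a) c₀ hc₀ (hne0 a))
      (fun c => g (some c)) hz0
    intro o
    cases o with
    | none => exact hnone
    | some c => exact hmain c
  have hcard := hli.fintype_card_le_finrank
  rw [Module.finrank_pi, Fintype.card_fin, Fintype.card_option, Fintype.card_coe,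
    Finset.card_erase_of_mem hc₀] at hcard
  have hCpos : 0 < C.card := Finset.card_pos.mpr ⟨c₀, hc₀⟩
  omega
end

section
/- Let A(n,w,λ)_{m+1} denote the maximum size of a length-n constant-weight-w code over an alphabet of size m+1 (containing zero) in which any two distinct codewords have at most λ nonzero agreements. Then A(n,w,λ)_{m+1} ≤ ⌊(mn/w)·A(n−1, w−1, λ−1)_{m+1}⌋ for λ ≥ 1 and w ≥ 1. -/
/-- A constant-weight-`w` code of length `n` over the alphabet `Fin (m+1)` (with zero
symbol `0`), in which any two distinct codewords have at most `lam` nonzero agreements. -/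
def IsNonbinaryCWCode (n w lam m : ℕ) (C : Finset (Fin n → Fin (m+1))) : Prop :=
  (∀ c ∈ C, (Finset.univ.filter fun i => c i ≠ 0).card = w) ∧
  (∀ c ∈ C, ∀ c' ∈ C, c ≠ c' →
    (Finset.univ.filter fun i => c i = c' i ∧ c i ≠ 0).card ≤ lam)

/-- `A(n,w,λ)_{m+1}`: the maximum size of such a code. -/
noncomputable def maxCodeSize (n w lam m : ℕ) : ℕ :=
  sSup {s : ℕ | ∃ C : Finset (Fin n → Fin (m+1)), IsNonbinaryCWCode n w lam m C ∧ C.card = s}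

lemma codeSet_bddAbove (n w lam m : ℕ) :
    BddAbove {s : ℕ | ∃ C : Finset (Fin n → Fin (m+1)), IsNonbinaryCWCode n w lam m C ∧ C.card = s} := by
  refine ⟨Fintype.card (Fin n → Fin (m+1)), ?_⟩
  rintro s ⟨C, _, rfl⟩
  exact Finset.card_le_univ C

lemma codeSet_nonempty (n w lam m : ℕ) :
    Set.Nonempty {s : ℕ | ∃ C : Finset (Fin n → Fin (m+1)), IsNonbinaryCWCode n w lam m C ∧ C.card = s} :=
  ⟨0, ∅, ⟨fun c hc => absurd hc (by simp), fun c hc => absurd hc (by simp)⟩, rfl⟩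

lemma aux_card {N : ℕ} (i : Fin (N+1)) (P : Fin (N+1) → Prop) [DecidablePred P] (hi : P i) :
    (Finset.univ.filter fun j => P (i.succAbove j)).card = (Finset.univ.filter P).card - 1 := by
  have himg : (Finset.univ.filter fun j => P (i.succAbove j)).image i.succAbove
      = (Finset.univ.filter P).erase i := by
    ext k
    simp only [Finset.mem_image, Finset.mem_filter, Finset.mem_erase, Finset.mem_univ, true_and]
    constructor
    · rintro ⟨j, hj, rfl⟩
      exact ⟨Fin.succAbove_ne i j, hj⟩
    · rintro ⟨hk, hP⟩
      obtain ⟨j, rfl⟩ := Fin.exists_succAbove_eq hk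
      exact ⟨j, hP, rfl⟩
  have hcard := Finset.card_image_of_injective
    (Finset.univ.filter fun j => P (i.succAbove j))
    (Fin.succAbove_right_injective (p := i))
  rw [himg] at hcard
  rw [← hcard, Finset.card_erase_of_mem (by simp [hi])]

lemma key (N W L m : ℕ) :
    maxCodeSize (N+1) (W+1) (L+1) m ≤ m * (N+1) * maxCodeSize N W L m / (W+1) := by
  set A := maxCodeSize N W L m with hA
  -- obtain an optimal code C
  obtain ⟨C, hC, hcard⟩ :
      ∃ C : Finset (Fin (N+1) → Fin (m+1)),
        IsNonbinaryCWCode (N+1) (W+1) (L+1) m C ∧ C.card = maxCodeSize (N+1) (W+1) (L+1) m :=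
    Nat.sSup_mem (codeSet_nonempty _ _ _ _) (codeSet_bddAbove _ _ _ _)
  obtain ⟨hweight, hcorr⟩ := hC
  -- per-(i,v) bound via shortening
  have hsub : ∀ (i : Fin (N+1)) (v : Fin (m+1)), v ≠ 0 →
      (C.filter fun c => c i = v).card ≤ A := by
    intro i v hv
    set Ci := C.filter fun c => c i = v with hCi
    have hinj : Set.InjOn (fun c : Fin (N+1) → Fin (m+1) => c ∘ i.succAbove) Ci := by
      intro c hc c' hc' h
      funext k
      rcases eq_or_ne k i with rfl | hk
      · rw [(Finset.mem_filter.mp hc).2, (Finset.mem_filter.mp hc').2]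
      · obtain ⟨j, rfl⟩ := Fin.exists_succAbove_eq hk
        exact congrFun h j
    set D := Ci.image (fun c => c ∘ i.succAbove) with hD
    have hDcard : D.card = Ci.card := Finset.card_image_of_injOn hinj
    have hDcode : IsNonbinaryCWCode N W L m D := by
      constructor
      · rintro d hd
        obtain ⟨c, hc, rfl⟩ := Finset.mem_image.mp hd
        have hcC : c ∈ C := (Finset.mem_filter.mp hc).1
        have hci : c i ≠ 0 := by rw [(Finset.mem_filter.mp hc).2]; exact hv
        have := aux_card i (fun k => c k ≠ 0) hci
        simpa [hweight c hcC] using this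
      · rintro d hd d' hd' hdd
        obtain ⟨c, hc, rfl⟩ := Finset.mem_image.mp hd
        obtain ⟨c', hc', rfl⟩ := Finset.mem_image.mp hd'
        have hcC : c ∈ C := (Finset.mem_filter.mp hc).1
        have hcC' : c' ∈ C := (Finset.mem_filter.mp hc').1
        have hne : c ≠ c' := fun h => hdd (by rw [h])
        have hiP : c i = c' i ∧ c i ≠ 0 := by
          rw [(Finset.mem_filter.mp hc).2, (Finset.mem_filter.mp hc').2]
          exact ⟨rfl, hv⟩
        have h1 := aux_card i (fun k => c k = c' k ∧ c k ≠ 0) hiP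
        have h2 := hcorr c hcC c' hcC' hne
        have h3 : 1 ≤ (Finset.univ.filter fun k => c k = c' k ∧ c k ≠ 0).card :=
          Finset.card_pos.mpr ⟨i, by
            simp only [Finset.mem_filter, Finset.mem_univ, true_and]; exact hiP⟩
        simp only [Function.comp] at *
        omega
    have : D.card ≤ A :=
      le_csSup (codeSet_bddAbove N W L m) ⟨D, hDcode, rfl⟩
    omega
  -- double counting
  set V := Finset.univ.filter (fun v : Fin (m+1) => v ≠ 0) with hV
  have hVcard : V.card = m := by
    rw [hV, Finset.filter_ne', Finset.card_erase_of_mem (Finset.mem_univ 0)]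
    simp
  have hcount : (W+1) * C.card = ∑ i : Fin (N+1), ∑ v ∈ V, (C.filter fun c => c i = v).card := by
    have step : ∀ i : Fin (N+1), ∑ v ∈ V, (C.filter fun c => c i = v).card
        = ∑ c ∈ C, if c i ≠ 0 then 1 else 0 := by
      intro i
      simp_rw [Finset.card_filter]
      rw [Finset.sum_comm]
      refine Finset.sum_congr rfl fun c _ => ?_
      rw [Finset.sum_ite_eq V (c i) (fun _ => 1)]
      congr 1
      simp [hV]
    simp_rw [step]
    rw [Finset.sum_comm]
    have : ∀ c ∈ C, (∑ _i : Fin (N+1), if c _i ≠ 0 then 1 else 0) = W + 1 := by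
      intro c hc
      rw [← Finset.card_filter]
      exact hweight c hc
    rw [Finset.sum_congr rfl this, Finset.sum_const, smul_eq_mul, mul_comm]
  have hbound : (W+1) * C.card ≤ m * (N+1) * A := by
    rw [hcount]
    calc ∑ i : Fin (N+1), ∑ v ∈ V, (C.filter fun c => c i = v).card
        ≤ ∑ i : Fin (N+1), ∑ _v ∈ V, A := by
          refine Finset.sum_le_sum fun i _ => Finset.sum_le_sum fun v hv => ?_
          exact hsub i v (by simpa [hV] using hv)
      _ = (N+1) * (m * A) := by
          simp [hVcard, Finset.sum_const, mul_assoc]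
      _ = m * (N+1) * A := by ring
  rw [← hcard]
  refine (Nat.le_div_iff_mul_le (Nat.succ_pos W)).mpr ?_
  calc C.card * (W+1) = (W+1) * C.card := by ring
    _ ≤ m * (N+1) * A := hbound

/-- Shortening bound (Svanström):
`A(n,w,λ)_{m+1} ≤ ⌊(mn/w)·A(n−1, w−1, λ−1)_{m+1}⌋` for `λ ≥ 1` and `w ≥ 1`. -/
theorem stmt_5 (n w lam m : ℕ) (hn : 1 ≤ n) (hw : 1 ≤ w) (hlam : 1 ≤ lam) :
    maxCodeSize n w lam m ≤ m * n * maxCodeSize (n-1) (w-1) (lam-1) m / w := by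
  obtain ⟨N, rfl⟩ := Nat.exists_eq_succ_of_ne_zero (by omega : n ≠ 0)
  obtain ⟨W, rfl⟩ := Nat.exists_eq_succ_of_ne_zero (by omega : w ≠ 0)
  obtain ⟨L, rfl⟩ := Nat.exists_eq_succ_of_ne_zero (by omega : lam ≠ 0)
  simpa using key N W L m
end

section
/- Any (Λ×S×T, w, 0, λ) 3-dimensional optical orthogonal code C satisfies |C| ≤ ⌊(ΛS/w)·⌊T(ΛS−1)/(w−1)·⌊⋯⌊T(ΛS−λ)/(w−λ)⌋⋯⌋⌋⌋ (iterated floor Johnson bound for ideal 3D OOCs). -/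
/-- Cyclic shift by `t` in the temporal (third) coordinate of a `Λ×S×T` binary array,
viewed as a finite set of pulse positions. -/
def tshift {Λ S T : ℕ} (t : Fin T) (A : Finset (Fin Λ × Fin S × Fin T)) :
    Finset (Fin Λ × Fin S × Fin T) :=
  A.image fun p => (p.1, p.2.1, p.2.2 + t)

/-- A `(Λ×S×T, w, λa, λc)` 3-dimensional optical orthogonal code. -/
def Is3DOOC {Λ S T : ℕ} (w la lc : ℕ) (C : Finset (Finset (Fin Λ × Fin S × Fin T))) : Prop :=
  (∀ A ∈ C, A.card = w) ∧
  (∀ A ∈ C, ∀ t : Fin T, (t : ℕ) ≠ 0 → (A ∩ tshift t A).card ≤ la) ∧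
  (∀ A ∈ C, ∀ B ∈ C, A ≠ B → ∀ t : Fin T, (A ∩ tshift t B).card ≤ lc)

/-- The nested part of the Johnson bound for ideal 3D OOCs:
`johnsonNest L T w lam lam = ⌊T(L−1)/(w−1)·⌊⋯⌊T(L−lam)/(w−lam)⌋⋯⌋⌋`. -/
def johnsonNest (L T w lam : ℕ) : ℕ → ℕ
  | 0 => 1
  | i + 1 => T * (L - (lam - i)) * johnsonNest L T w lam i / (w - (lam - i))

/-!
Ideal autocorrelation means that no codeword has two pulses at the same spatial position
(wavelength, space), and also that the `T` cyclic time-shifts of a codeword are pairwise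
distinct; with `λ < w` the shifts of different codewords are distinct too. So the shifts form a
family of `|C|·T` sets of size `w`, each meeting every one of the `ΛS` groups of `T` points at
most once, any two sharing at most `λ` points. For such a family a set `P` lies in at most
`T(ΛS − |P|)/(w − |P|)` times as many members as the largest number through a set `P ∪ {q}`,
and a `(λ+1)`-set lies in at most one member; going down from `|P| = λ + 1` to `P = ∅` gives
`w·|C|·T ≤ T·ΛS·johnsonNest ΛS T w λ λ`.
-/

open Finset

section Transversal

variable {α β : Type*} [Fintype α] [Fintype β] [DecidableEq α] [DecidableEq β]
  {col : α → β} {T : ℕ}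

lemma card_filter_col_notMem_image (hcol : ∀ b, #{a | col a = b} = T) {P : Finset α}
    (hP : Set.InjOn col P) :
    #{q | col q ∉ P.image col} = T * (Fintype.card β - #P) := by
  rw [card_eq_sum_card_fiberwise (f := col) (t := univ \ P.image col)
    (fun q hq => by simpa using hq)]
  have hfiber : ∀ b ∈ univ \ P.image col,
      #{a ∈ {q | col q ∉ P.image col} | col a = b} = T := by
    intro b hb
    rw [← hcol b, filter_filter]
    congr 1
    ext a
    simp only [mem_filter, mem_univ, true_and, and_iff_right_iff_imp]
    rintro rfl
    simpa using hb
  rw [sum_congr rfl hfiber, sum_const, smul_eq_mul, card_sdiff_of_subset (subset_univ _),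
    card_univ, card_image_of_injOn hP, mul_comm]

/-- Double count the pairs `(X, q)` with `P ⊆ X ∋ q` and `q` in a group missed by `P`: a member
`X ⊇ P` has at least `w - #P` such `q`, and each of the `T * (card β - #P)` points `q` lies in at
most `m` members. -/
lemma sub_card_mul_card_filter_superset_le (hcol : ∀ b, #{a | col a = b} = T)
    {w : ℕ} {F : Finset (Finset α)} (hw : ∀ X ∈ F, #X = w) (hF : ∀ X ∈ F, Set.InjOn col X)
    (P : Finset α) {m : ℕ} (hm : ∀ q ∉ P, #{X ∈ F | insert q P ⊆ X} ≤ m) :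
    (w - #P) * #{X ∈ F | P ⊆ X} ≤ T * (Fintype.card β - #P) * m := by
  obtain hempty | ⟨X₀, hX₀⟩ := (F.filter (P ⊆ ·)).eq_empty_or_nonempty
  · simp [hempty]
  have hP : Set.InjOn col P := (hF X₀ (mem_filter.1 hX₀).1).mono (mem_filter.1 hX₀).2
  rw [mul_comm, ← card_filter_col_notMem_image hcol hP]
  refine card_mul_le_card_mul (fun X q => q ∈ X) (fun X hX => ?_) (fun q hq => ?_)
  · obtain ⟨hXF, hPX⟩ := mem_filter.1 hX
    rw [← hw X hXF, ← card_sdiff_of_subset hPX]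
    refine card_le_card fun q hq => ?_
    obtain ⟨hqX, hqP⟩ := mem_sdiff.1 hq
    simp only [bipartiteAbove, mem_filter, mem_univ, true_and, mem_image, not_exists, not_and]
    exact ⟨fun p hp hpq => hqP (hF X hXF (hPX hp) hqX hpq ▸ hp), hqX⟩
  · have hqP : q ∉ P := fun hqP => (mem_filter.1 hq).2 (mem_image_of_mem col hqP)
    refine le_trans (le_of_eq ?_) (hm q hqP)
    simp only [bipartiteBelow, filter_filter, insert_subset_iff]
    congr 1
    exact filter_congr fun X _ => and_comm

lemma card_filter_superset_le_johnsonNest (hcol : ∀ b, #{a | col a = b} = T)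
    {w lam : ℕ} (hlw : lam < w) {F : Finset (Finset α)} (hw : ∀ X ∈ F, #X = w)
    (hF : ∀ X ∈ F, Set.InjOn col X) (hinter : ∀ X ∈ F, ∀ Y ∈ F, X ≠ Y → #(X ∩ Y) ≤ lam)
    {k : ℕ} (hk : k ≤ lam) {P : Finset α} (hP : #P = lam - k + 1) :
    #{X ∈ F | P ⊆ X} ≤ johnsonNest (Fintype.card β) T w lam k := by
  induction k generalizing P with
  | zero =>
    refine card_le_one.2 fun X hX Y hY => by_contra fun hXY => ?_
    obtain ⟨hXF, hPX⟩ := mem_filter.1 hX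
    obtain ⟨hYF, hPY⟩ := mem_filter.1 hY
    have := card_le_card (subset_inter hPX hPY)
    have := hinter X hXF Y hYF hXY
    omega
  | succ k ih =>
    have hbound := sub_card_mul_card_filter_superset_le hcol hw hF P fun q hq =>
      ih (by omega) (by rw [card_insert_of_notMem hq]; omega)
    rw [johnsonNest, Nat.le_div_iff_mul_le (by omega), mul_comm]
    rwa [show #P = lam - k by omega] at hbound

theorem mul_card_le_johnsonNest (hcol : ∀ b, #{a | col a = b} = T)
    {w lam : ℕ} (hlw : lam < w) {F : Finset (Finset α)} (hw : ∀ X ∈ F, #X = w)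
    (hF : ∀ X ∈ F, Set.InjOn col X) (hinter : ∀ X ∈ F, ∀ Y ∈ F, X ≠ Y → #(X ∩ Y) ≤ lam) :
    w * #F ≤ T * Fintype.card β * johnsonNest (Fintype.card β) T w lam lam := by
  have hbound := sub_card_mul_card_filter_superset_le hcol hw hF ∅ fun q _ =>
    card_filter_superset_le_johnsonNest hcol hlw hw hF hinter le_rfl (by simp)
  simpa using hbound

end Transversal

section ThreeDimensional

variable {Λ S T : ℕ}

def spatial (p : Fin Λ × Fin S × Fin T) : Fin Λ × Fin S := (p.1, p.2.1)

lemma card_filter_spatial_eq (b : Fin Λ × Fin S) :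
    #{p : Fin Λ × Fin S × Fin T | spatial p = b} = T := by
  have : ({p | spatial p = b} : Finset (Fin Λ × Fin S × Fin T)) =
      univ.image fun t => (b.1, b.2, t) := by
    ext ⟨x, y, t⟩
    simp [spatial, Prod.ext_iff, eq_comm]
  rw [this, card_image_of_injective _ fun s t h => by simpa using h, card_univ, Fintype.card_fin]

lemma tshift_point_injective (t : Fin T) :
    Function.Injective fun p : Fin Λ × Fin S × Fin T => (p.1, p.2.1, p.2.2 + t) := by
  rintro ⟨x, y, s⟩ ⟨x', y', s'⟩ h
  simpa using h

lemma card_tshift (t : Fin T) (A : Finset (Fin Λ × Fin S × Fin T)) : #(tshift t A) = #A :=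
  card_image_of_injective _ (tshift_point_injective t)

lemma injOn_spatial_tshift {A : Finset (Fin Λ × Fin S × Fin T)}
    (hA : Set.InjOn spatial (A : Set (Fin Λ × Fin S × Fin T))) (t : Fin T) :
    Set.InjOn spatial (tshift t A : Set (Fin Λ × Fin S × Fin T)) := by
  rintro _ hp' _ hq' hpq
  obtain ⟨p, hp, rfl⟩ := mem_image.1 hp'
  obtain ⟨q, hq, rfl⟩ := mem_image.1 hq'
  rw [hA hp hq hpq]

def shifts (C : Finset (Finset (Fin Λ × Fin S × Fin T))) :
    Finset (Finset (Fin Λ × Fin S × Fin T)) :=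
  (C ×ˢ univ).image fun At => tshift At.2 At.1

namespace Is3DOOC

variable {w la lc : ℕ}

lemma eq_empty_of_T_eq_zero {C : Finset (Finset (Fin Λ × Fin S × Fin 0))}
    (h : Is3DOOC w la lc C) (hw : 0 < w) : C = ∅ :=
  eq_empty_of_forall_notMem fun A hA => by
    have hA0 : A = ∅ := eq_empty_of_forall_notMem fun p => p.2.2.elim0
    exact hw.ne' (by rw [← h.1 A hA, hA0, card_empty])

lemma card_of_mem_shifts {C : Finset (Finset (Fin Λ × Fin S × Fin T))}
    (h : Is3DOOC w la lc C) {X : Finset (Fin Λ × Fin S × Fin T)} (hX : X ∈ shifts C) :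
    #X = w := by
  obtain ⟨⟨A, t⟩, hAt, rfl⟩ := mem_image.1 hX
  exact (card_tshift t A).trans (h.1 A (mem_product.1 hAt).1)

end Is3DOOC

section NeZero

variable [NeZero T]

lemma tshift_tshift (t s : Fin T) (A : Finset (Fin Λ × Fin S × Fin T)) :
    tshift s (tshift t A) = tshift (t + s) A := by
  simp only [tshift, image_image, Function.comp_def, add_assoc]

lemma card_tshift_inter_tshift (t s : Fin T) (A B : Finset (Fin Λ × Fin S × Fin T)) :
    #(tshift t A ∩ tshift s B) = #(A ∩ tshift (s - t) B) := by
  rw [← sub_add_cancel s t, ← tshift_tshift, add_sub_cancel_right, tshift, tshift,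
    ← image_inter _ _ (tshift_point_injective t),
    card_image_of_injective _ (tshift_point_injective t)]

namespace Is3DOOC

variable {w lc : ℕ} {C : Finset (Finset (Fin Λ × Fin S × Fin T))}
  {A B X Y : Finset (Fin Λ × Fin S × Fin T)}

lemma disjoint_tshift (h : Is3DOOC w 0 lc C) (hA : A ∈ C) {t : Fin T} (ht : t ≠ 0) :
    Disjoint A (tshift t A) := by
  rw [disjoint_iff_inter_eq_empty, ← card_eq_zero, ← Nat.le_zero]
  exact h.2.1 A hA t (Fin.val_ne_zero_iff.2 ht)

lemma injOn_spatial (h : Is3DOOC w 0 lc C) (hA : A ∈ C) :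
    Set.InjOn spatial (A : Set (Fin Λ × Fin S × Fin T)) := by
  rintro ⟨x, y, s⟩ hp ⟨x', y', s'⟩ hq hpq
  obtain ⟨rfl, rfl⟩ : x = x' ∧ y = y' := by simpa [spatial] using hpq
  by_contra hne
  have hshift : (x, y, s') ∈ tshift (s' - s) A := mem_image.2 ⟨_, hp, by simp⟩
  exact disjoint_left.1 (h.disjoint_tshift hA (sub_ne_zero.2 fun h' => hne (by rw [h'])))
    hq hshift

lemma card_tshift_inter_tshift_le (h : Is3DOOC w 0 lc C) (hA : A ∈ C) (hB : B ∈ C)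
    {t s : Fin T} (hne : (A, t) ≠ (B, s)) : #(tshift t A ∩ tshift s B) ≤ lc := by
  rw [card_tshift_inter_tshift]
  by_cases hAB : A = B
  · subst hAB
    have hts : s - t ≠ 0 := sub_ne_zero.2 fun hst => hne (by rw [hst])
    simp [disjoint_iff_inter_eq_empty.1 (h.disjoint_tshift hA hts)]
  · exact h.2.2 A hA B hB hAB _

lemma card_shifts (h : Is3DOOC w 0 lc C) (hlw : lc < w) : #(shifts C) = #C * T := by
  rw [shifts, card_image_of_injOn, card_product, card_univ, Fintype.card_fin]
  rintro ⟨A, t⟩ hAt ⟨B, s⟩ hBs heq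
  by_contra hne
  have := h.card_tshift_inter_tshift_le (mem_product.1 hAt).1 (mem_product.1 hBs).1 hne
  simp only at heq
  rw [heq, inter_self, card_tshift, h.1 B (mem_product.1 hBs).1] at this
  omega

lemma injOn_spatial_of_mem_shifts (h : Is3DOOC w 0 lc C) (hX : X ∈ shifts C) :
    Set.InjOn spatial (X : Set (Fin Λ × Fin S × Fin T)) := by
  obtain ⟨⟨A, t⟩, hAt, rfl⟩ := mem_image.1 hX
  exact injOn_spatial_tshift (h.injOn_spatial (mem_product.1 hAt).1) t

lemma card_inter_le_of_mem_shifts (h : Is3DOOC w 0 lc C) (hX : X ∈ shifts C)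
    (hY : Y ∈ shifts C) (hXY : X ≠ Y) : #(X ∩ Y) ≤ lc := by
  obtain ⟨⟨A, t⟩, hAt, rfl⟩ := mem_image.1 hX
  obtain ⟨⟨B, s⟩, hBs, rfl⟩ := mem_image.1 hY
  exact h.card_tshift_inter_tshift_le (mem_product.1 hAt).1 (mem_product.1 hBs).1
    fun hAB => hXY (by rw [hAB])

end Is3DOOC

end NeZero

end ThreeDimensional

/-- Johnson bound for ideal 3D OOCs: any `(Λ×S×T, w, 0, λ)`-OOC `C` satisfies
`|C| ≤ ⌊(ΛS/w)·⌊T(ΛS−1)/(w−1)·⌊⋯⌊T(ΛS−λ)/(w−λ)⌋⋯⌋⌋⌋`. -/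
theorem stmt_7 (Λ S T w lam : ℕ) (hlw : lam < w)
    (C : Finset (Finset (Fin Λ × Fin S × Fin T))) (h : Is3DOOC w 0 lam C) :
    C.card ≤ Λ * S * johnsonNest (Λ * S) T w lam lam / w := by
  have hw : 0 < w := by omega
  obtain rfl | hT := T.eq_zero_or_pos
  · simp [h.eq_empty_of_T_eq_zero hw]
  have : NeZero T := ⟨hT.ne'⟩
  have hbound := mul_card_le_johnsonNest card_filter_spatial_eq hlw
    (fun _ => h.card_of_mem_shifts) (fun _ => h.injOn_spatial_of_mem_shifts)
    (fun _ hX _ hY => h.card_inter_le_of_mem_shifts hX hY)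
  simp only [h.card_shifts hlw, Fintype.card_prod, Fintype.card_fin] at hbound
  rw [Nat.le_div_iff_mul_le hw, mul_comm]
  exact Nat.le_of_mul_le_mul_left (by linarith) hT
end

section
/- If C is an ideal (Λ×S×T, w, 0, λ) 3D-OOC of maximal weight w = ΛS, then |C| ≤ T^λ. -/
/-!
Zero autocorrelation forbids two pulses in one row (they would meet under the shift by their
time difference), so a codeword of weight `ΛS` has exactly one pulse per row: it is the graph of
a map `f` from rows to `Fin T`. The cross-correlation of the graphs of `f` and `g` at shift `t`
counts the rows where `f = g + t`. Fixing `λ + 1` rows `r₀, …, r_λ`, the differences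
`f rᵢ - f r₀` (`i ≥ 1`) therefore determine the codeword, since two codewords sharing them
would agree up to the shift `f r₀ - g r₀` on `λ + 1` rows. This leaves at most `T ^ λ` codewords.
-/

open Finset

theorem card_le_pow_of_card_agree_add_le {R G : Type*} [Fintype R] [DecidableEq R]
    [AddCommGroup G] [Fintype G] [DecidableEq G] {lam : ℕ} (F : Finset (R → G))
    (hF : ∀ f ∈ F, ∀ g ∈ F, f ≠ g → ∀ t, #{r | f r = g r + t} ≤ lam) :
    #F ≤ Fintype.card G ^ lam := by
  rcases le_or_gt (Fintype.card R) lam with hR | hR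
  · calc #F ≤ Fintype.card (R → G) := card_le_univ F
      _ = Fintype.card G ^ Fintype.card R := Fintype.card_fun
      _ ≤ Fintype.card G ^ lam := Nat.pow_le_pow_right Fintype.card_pos hR
  obtain ⟨ι⟩ : Nonempty (Fin (lam + 1) ↪ R) :=
    Function.Embedding.nonempty_of_card_le (by simpa using hR)
  have hinj : Set.InjOn (fun (f : R → G) (i : Fin lam) => f (ι i.succ) - f (ι 0)) F := by
    intro f hf g hg hfg
    by_contra hne
    have hshift : ∀ i, f (ι i) = g (ι i) + (f (ι 0) - g (ι 0)) := by
      refine Fin.cases (by abel) fun i => ?_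
      have := congrFun hfg i
      simp only at this
      rw [← sub_add_cancel (f (ι i.succ)) (f (ι 0)), this]
      abel
    have hsub : univ.map ι ⊆ ({r | f r = g r + (f (ι 0) - g (ι 0))} : Finset R) := by
      simp only [subset_iff, mem_map, mem_univ, true_and, mem_filter]
      rintro _ ⟨i, rfl⟩
      exact hshift i
    have := (card_le_card hsub).trans (hF f hf g hg hne _)
    simp at this
  calc #F ≤ Fintype.card (Fin lam → G) := card_le_card_of_injOn _ (fun _ _ => mem_univ _) hinj
    _ = Fintype.card G ^ lam := by simp

section Codewords

variable {Λ S T : ℕ}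

def rowPulse (f : Fin Λ × Fin S → Fin T) : Fin Λ × Fin S ↪ Fin Λ × Fin S × Fin T where
  toFun r := (r.1, r.2, f r)
  inj' r s h := by
    simp only [Prod.mk.injEq] at h
    exact Prod.ext h.1 h.2.1

@[simp]
theorem rowPulse_apply (f : Fin Λ × Fin S → Fin T) (r : Fin Λ × Fin S) :
    rowPulse f r = (r.1, r.2, f r) :=
  rfl

def rowGraph (f : Fin Λ × Fin S → Fin T) : Finset (Fin Λ × Fin S × Fin T) :=
  univ.map (rowPulse f)

theorem mem_rowGraph {f : Fin Λ × Fin S → Fin T} {a : Fin Λ} {b : Fin S} {u : Fin T} :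
    (a, b, u) ∈ rowGraph f ↔ u = f (a, b) := by
  simp [rowGraph, Prod.ext_iff, eq_comm]

theorem rowGraph_injective : Function.Injective (rowGraph : (Fin Λ × Fin S → Fin T) → _) := by
  intro f g hfg
  funext r
  exact mem_rowGraph.1 (hfg ▸ mem_rowGraph.2 rfl)

theorem card_rowGraph (f : Fin Λ × Fin S → Fin T) : #(rowGraph f) = Λ * S := by
  simp [rowGraph]

theorem card_rowGraph_inter_rowGraph (f g : Fin Λ × Fin S → Fin T) :
    #(rowGraph f ∩ rowGraph g) = #{r | f r = g r} := by
  have : rowGraph f ∩ rowGraph g = ({r | f r = g r} : Finset _).map (rowPulse f) := by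
    ext ⟨a, b, u⟩
    simp only [mem_inter, mem_rowGraph, mem_map, mem_filter, mem_univ, true_and, rowPulse_apply, Prod.ext_iff, Prod.exists]
    grind
  rw [this, card_map]

theorem mem_tshift [NeZero T] {t : Fin T} {A : Finset (Fin Λ × Fin S × Fin T)}
    {p : Fin Λ × Fin S × Fin T} : p ∈ tshift t A ↔ (p.1, p.2.1, p.2.2 - t) ∈ A := by
  simp only [tshift, mem_image]
  constructor
  · rintro ⟨q, hq, rfl⟩
    simpa using hq
  · exact fun h => ⟨_, h, by simp⟩

theorem tshift_rowGraph [NeZero T] (t : Fin T) (f : Fin Λ × Fin S → Fin T) :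
    tshift t (rowGraph f) = rowGraph fun r => f r + t := by
  ext ⟨a, b, u⟩
  simp only [mem_tshift, mem_rowGraph, sub_eq_iff_eq_add]

theorem injOn_row_of_autocorrelation_zero [NeZero T] {A : Finset (Fin Λ × Fin S × Fin T)}
    (hauto : ∀ t : Fin T, (t : ℕ) ≠ 0 → #(A ∩ tshift t A) ≤ 0) :
    Set.InjOn (fun p => (p.1, p.2.1)) (A : Set (Fin Λ × Fin S × Fin T)) := by
  rintro ⟨a, b, u⟩ hu ⟨a', b', v⟩ hv hrow
  obtain ⟨rfl, rfl⟩ := Prod.mk.inj hrow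
  by_contra hne
  have hshift : ((u - v : Fin T) : ℕ) ≠ 0 := by
    simpa [Fin.ext_iff, sub_eq_zero] using hne
  have : (a, b, u) ∈ A ∩ tshift (u - v) A := mem_inter.2 ⟨hu, mem_tshift.2 (by simpa using hv)⟩
  exact notMem_empty _ (card_eq_zero.1 (Nat.le_zero.1 (hauto _ hshift)) ▸ this)

theorem exists_eq_rowGraph [NeZero T] {A : Finset (Fin Λ × Fin S × Fin T)} (hcard : #A = Λ * S)
    (hauto : ∀ t : Fin T, (t : ℕ) ≠ 0 → #(A ∩ tshift t A) ≤ 0) :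
    ∃ f, A = rowGraph f := by
  have hrows : A.image (fun p => (p.1, p.2.1)) = univ := by
    refine eq_univ_of_card _ ?_
    rw [card_image_of_injOn (injOn_row_of_autocorrelation_zero hauto), hcard]
    simp
  have hpulse : ∀ r : Fin Λ × Fin S, ∃ u, (r.1, r.2, u) ∈ A := by
    intro r
    obtain ⟨p, hp, rfl⟩ := mem_image.1 (hrows ▸ mem_univ r)
    exact ⟨p.2.2, hp⟩
  choose f hf using hpulse
  refine ⟨f, (eq_of_subset_of_card_le ?_ (by rw [hcard, card_rowGraph])).symm⟩
  simp only [rowGraph, subset_iff, mem_map, mem_univ, true_and]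
  rintro _ ⟨r, rfl⟩
  exact hf r

end Codewords

/-- An ideal `(Λ×S×T, w, 0, λ)` 3D-OOC of maximal weight `w = ΛS` has at most `T^λ`
codewords. -/
theorem stmt_8 (Λ S T lam : ℕ) (hLS : 0 < Λ * S)
    (C : Finset (Finset (Fin Λ × Fin S × Fin T))) (h : Is3DOOC (Λ * S) 0 lam C) :
    C.card ≤ T ^ lam := by
  obtain ⟨hweight, hauto, hcross⟩ := h
  obtain rfl | hT := eq_or_ne T 0
  · suffices C = ∅ by simp [this]
    refine eq_empty_of_forall_notMem fun A hA => ?_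
    obtain ⟨⟨_, _, u⟩, _⟩ := card_pos.1 (hweight A hA ▸ hLS)
    exact u.elim0
  have : NeZero T := ⟨hT⟩
  have hC : C ⊆ ({f | rowGraph f ∈ C} : Finset _).image rowGraph := by
    intro A hA
    obtain ⟨f, rfl⟩ := exists_eq_rowGraph (hweight A hA) (hauto A hA)
    exact mem_image_of_mem _ (mem_filter.2 ⟨mem_univ f, hA⟩)
  calc #C ≤ #({f | rowGraph f ∈ C} : Finset _) := (card_le_card hC).trans card_image_le
    _ ≤ Fintype.card (Fin T) ^ lam := by
      refine card_le_pow_of_card_agree_add_le _ fun f hf g hg hfg t => ?_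
      rw [← card_rowGraph_inter_rowGraph, ← tshift_rowGraph]
      exact hcross _ (mem_filter.1 hf).2 _ (mem_filter.1 hg).2 (rowGraph_injective.ne hfg) t
    _ = T ^ lam := by rw [Fintype.card_fin]
end

section
/- For k odd and λ = 1, the Johnson bound value ⌊(θ(k)/(q+1))/(q+1) · ⌊(q+1)(θ(k)/(q+1) − 1)/q⌋⌋ equals q·θ(k)·θ(k−2)/(q+1)², where θ(j) = (q^(j+1)−1)/(q−1). -/
/-- For `k` odd and `λ = 1`, the Johnson bound value
`⌊(θ(k)/(q+1))/(q+1) · ⌊(q+1)(θ(k)/(q+1) − 1)/q⌋⌋` equals `q·θ(k)·θ(k−2)/(q+1)²`,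
where `θ(j) = (q^(j+1)−1)/(q−1)` (all divisions are natural-number floor divisions,
and `(q+1) ∣ θ(k)` for odd `k` so `θ(k)/(q+1)` is exact). -/
theorem stmt_12 (q k : ℕ) (hq : 2 ≤ q) (hk : 3 ≤ k) (hodd : Odd k) :
    (q ^ (k+1) - 1) / (q - 1) / (q + 1) *
        ((q + 1) * ((q ^ (k+1) - 1) / (q - 1) / (q + 1) - 1) / q) / (q + 1) =
      q * ((q ^ (k+1) - 1) / (q - 1)) * ((q ^ (k-1) - 1) / (q - 1)) / (q + 1) ^ 2 := by
  obtain ⟨j, hjk⟩ := hodd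
  have hpk : q ^ (k-1) = (q^2) ^ j := by
    rw [← pow_mul]; congr 1; omega
  have hdvd : (q - 1) * (q + 1) ∣ q ^ (k-1) - 1 := by
    have h1 : (q - 1) * (q + 1) = q^2 - 1 := by
      have h2 : 1 ≤ q ^ 2 := Nat.one_le_pow _ _ (by omega)
      zify [show 1 ≤ q by omega, h2]; ring
    rw [hpk, h1]
    simpa using Nat.sub_dvd_pow_sub_pow (q^2) 1 j
  obtain ⟨s, hs⟩ := hdvd
  have h1le : 1 ≤ q ^ (k-1) := Nat.one_le_pow _ _ (by omega)
  have h1le' : 1 ≤ q ^ (k+1) := Nat.one_le_pow _ _ (by omega)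
  have hpk2 : q ^ (k+1) = q^2 * q ^ (k-1) := by
    rw [← pow_add]; congr 1; omega
  have hB : q ^ (k+1) - 1 = (q - 1) * ((q + 1) * (q^2 * s + 1)) := by
    zify [show 1 ≤ q by omega, h1le, h1le'] at hs ⊢
    have hpk2' : (q:ℤ) ^ (k+1) = (q:ℤ)^2 * (q:ℤ) ^ (k-1) := by exact_mod_cast hpk2
    rw [hpk2']; linear_combination (q:ℤ)^2 * hs
  have hA : q ^ (k-1) - 1 = (q - 1) * ((q + 1) * s) := by
    rw [hs]; ring
  have hq1 : 0 < q - 1 := by omega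
  have hθk : (q ^ (k+1) - 1) / (q - 1) = (q + 1) * (q^2 * s + 1) := by
    rw [hB, Nat.mul_div_cancel_left _ hq1]
  have hθk2 : (q ^ (k-1) - 1) / (q - 1) = (q + 1) * s := by
    rw [hA, Nat.mul_div_cancel_left _ hq1]
  rw [hθk, hθk2, Nat.mul_div_cancel_left _ (show 0 < q + 1 by omega)]
  rw [show q^2 * s + 1 - 1 = q^2 * s from by simp]
  rw [show (q + 1) * (q^2 * s) = q * ((q + 1) * (q * s)) from by ring,
    Nat.mul_div_cancel_left _ (show 0 < q by omega)]
  rw [show (q^2 * s + 1) * ((q + 1) * (q * s)) = (q + 1) * ((q^2 * s + 1) * (q * s)) from by ring,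
    Nat.mul_div_cancel_left _ (show 0 < q + 1 by omega)]
  rw [show q * ((q + 1) * (q^2 * s + 1)) * ((q + 1) * s)
      = (q + 1)^2 * (q * (q^2 * s + 1) * s) from by ring,
    Nat.mul_div_cancel_left _ (show 0 < (q + 1)^2 by positivity)]
  ring
end

section
/- For integers q ≥ 2, k ≥ 2 with (d+1) | (k+1), d ≥ 1: ⌊(θ(k)/θ(d))/(q+1) · ⌊θ(d)(θ(k)/θ(d) − 1)/q⌋⌋ = (θ(k)/(θ(d)(q+1)))·(θ(k−1) − θ(d−1)), where θ(j) = (q^(j+1)−1)/(q−1). -/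
/-- For integers `q ≥ 2`, `k ≥ 2`, `d ≥ 1` with `(d+1) ∣ (k+1)`:
`⌊(θ(k)/θ(d))/(q+1) · ⌊θ(d)(θ(k)/θ(d) − 1)/q⌋⌋ = (θ(k)/(θ(d)(q+1)))·(θ(k−1) − θ(d−1))`,
where `θ(j) = (q^(j+1)−1)/(q−1)` (divisions are natural-number floor divisions;
the divisions by `θ(d)` and the final by `q+1` are exact). -/
theorem stmt_13 (q k d : ℕ) (hq : 2 ≤ q) (hk : 2 ≤ k) (hd : 1 ≤ d)
    (hdvd : (d + 1) ∣ (k + 1)) :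
    (let θ : ℕ → ℕ := fun j => (q ^ (j+1) - 1) / (q - 1);
      θ k / θ d * (θ d * (θ k / θ d - 1) / q) / (q + 1)) =
    (let θ : ℕ → ℕ := fun j => (q ^ (j+1) - 1) / (q - 1);
      θ k / θ d * (θ (k-1) - θ (d-1)) / (q + 1)) := by
  set θ : ℕ → ℕ := fun j => (q ^ (j+1) - 1) / (q - 1) with hθ
  suffices h : θ d * (θ k / θ d - 1) / q = θ (k-1) - θ (d-1) by
    simp only [h]
  have hq1 : 0 < q - 1 := by omega
  have hdvd1 : ∀ n : ℕ, (q - 1) ∣ q ^ n - 1 := fun n => by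
    simpa using Nat.sub_dvd_pow_sub_pow q 1 n
  have hθmul : ∀ j : ℕ, (q - 1) * θ j = q ^ (j+1) - 1 := fun j => by
    simp only [hθ]; exact Nat.mul_div_cancel' (hdvd1 _)
  -- divisibility θ d ∣ θ k
  obtain ⟨c, hc⟩ := hdvd
  have hpow : q ^ (k+1) - 1 = (q ^ (d+1)) ^ c - 1 ^ c := by
    rw [← pow_mul, ← hc, one_pow]
  have hab : q ^ (d+1) - 1 ∣ q ^ (k+1) - 1 := by
    rw [hpow]; exact Nat.sub_dvd_pow_sub_pow _ 1 c
  have hθdk : θ d ∣ θ k := by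
    obtain ⟨m, hm⟩ := hab
    refine ⟨m, Nat.eq_of_mul_eq_mul_left hq1 ?_⟩
    have l1 : (q - 1) * (θ d * m) = ((q - 1) * θ d) * m := by ring
    rw [hθmul, l1, hθmul, ← hm]
  have hθdpos : 0 < θ d := by
    rw [hθ]
    have h2 : q ≤ q ^ (d+1) := Nat.le_self_pow (by omega) q
    exact Nat.div_pos (by omega) hq1
  have hkd : d + 1 ≤ k + 1 := Nat.le_of_dvd (by omega) ⟨c, hc⟩
  have hBA : q ^ d ≤ q ^ k := Nat.pow_le_pow_right (by omega) (by omega)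
  -- θ d * (θ k / θ d - 1) = θ k - θ d
  have h1 : θ d * (θ k / θ d - 1) = θ k - θ d := by
    rw [Nat.mul_sub, mul_one, Nat.mul_div_cancel' hθdk]
  have hk1 : k - 1 + 1 = k := by omega
  have hd1 : d - 1 + 1 = d := by omega
  have hA1 : (1:ℕ) ≤ q ^ d := Nat.one_le_pow _ _ (by omega)
  -- θ k - θ d = q * (θ (k-1) - θ (d-1))
  have h2 : (q - 1) * (θ k - θ d) = (q - 1) * (q * (θ (k-1) - θ (d-1))) := by
    have l1 : (q-1)*(θ k - θ d) = (q-1)*θ k - (q-1)*θ d := Nat.mul_sub _ _ _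
    have l2 : (q-1)*(q*(θ (k-1)-θ (d-1))) = q*((q-1)*(θ (k-1)-θ (d-1))) := by ring
    have l3 : (q-1)*(θ (k-1)-θ (d-1)) = (q-1)*θ (k-1) - (q-1)*θ (d-1) :=
      Nat.mul_sub _ _ _
    rw [l1, l2, l3, hθmul, hθmul, hθmul, hθmul, hk1, hd1]
    have e1 : q^(k+1) = q * q^k := by ring
    have e2 : q^(d+1) = q * q^d := by ring
    have l4 : q^k - 1 - (q^d - 1) = q^k - q^d := by omega
    rw [e1, e2, l4, Nat.mul_sub]
    have m1 : q * q^d ≤ q * q^k := Nat.mul_le_mul_left q hBA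
    have m2 : 1 * 1 ≤ q * q^d := Nat.mul_le_mul (by omega) hA1
    omega
  have h3 : θ k - θ d = q * (θ (k-1) - θ (d-1)) :=
    Nat.eq_of_mul_eq_mul_left hq1 h2
  rw [h1, h3, Nat.mul_div_cancel_left _ (by omega : 0 < q)]
end

section
/- For integers q ≥ 2 and k ≥ 2: ⌊(θ(k−1)/q)·⌊(q^k − 2)/(q−1)⌋⌋ = θ(k−1)·θ(k−2), where θ(j) = (q^(j+1)−1)/(q−1). -/
lemma geom_aux (q k : ℕ) (hq : 1 ≤ q) :
    (q - 1) * (∑ i ∈ Finset.range k, q ^ i) + 1 = q ^ k := by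
  induction k with
  | zero => simp
  | succ n ih =>
    rw [Finset.sum_range_succ, Nat.mul_add, pow_succ]
    have h1 : (q - 1) * q ^ n = q * q ^ n - 1 * q ^ n := Nat.sub_mul q 1 (q ^ n)
    have h2 : q ^ n ≤ q * q ^ n := Nat.le_mul_of_pos_left _ (by omega)
    have h3 : q ^ n * q = q * q ^ n := Nat.mul_comm _ _
    omega

/-- For integers `q ≥ 2` and `k ≥ 2`:
`⌊(θ(k−1)/q)·⌊(q^k − 2)/(q−1)⌋⌋ = θ(k−1)·θ(k−2)`, where `θ(j) = (q^(j+1)−1)/(q−1)`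
(natural-number floor divisions). -/
theorem stmt_16 (q k : ℕ) (hq : 2 ≤ q) (hk : 2 ≤ k) :
    (q ^ k - 1) / (q - 1) * ((q ^ k - 2) / (q - 1)) / q =
      ((q ^ k - 1) / (q - 1)) * ((q ^ (k-1) - 1) / (q - 1)) := by
  have hq1 : 1 ≤ q := by omega
  have hm : 0 < q - 1 := by omega
  set t := ∑ i ∈ Finset.range k, q ^ i with ht
  set s := ∑ i ∈ Finset.range (k - 1), q ^ i with hs
  have hgt : (q - 1) * t + 1 = q ^ k := geom_aux q k hq1
  have hgs : (q - 1) * s + 1 = q ^ (k - 1) := geom_aux q (k - 1) hq1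
  have hts : t = 1 + q * s := by
    rw [ht, hs]
    have hkk : k = (k - 1) + 1 := by omega
    rw [hkk, Finset.sum_range_succ', Finset.mul_sum]
    simp [pow_succ, mul_comm]
    omega
  have hpk : 1 ≤ q ^ k := Nat.one_le_pow _ _ (by omega)
  have h1 : (q ^ k - 1) / (q - 1) = t := by
    have : q ^ k - 1 = (q - 1) * t := by omega
    rw [this, Nat.mul_div_cancel_left _ hm]
  have hpk' : 1 ≤ q ^ (k - 1) := Nat.one_le_pow _ _ (by omega)
  have h2 : (q ^ (k - 1) - 1) / (q - 1) = s := by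
    have : q ^ (k - 1) - 1 = (q - 1) * s := by omega
    rw [this, Nat.mul_div_cancel_left _ hm]
  have h3 : (q ^ k - 2) / (q - 1) = q * s := by
    have hd : (q - 1) * (q * s + 1) = (q - 1) * (q * s) + (q - 1) := by ring
    have hgt' : (q - 1) * (q * s + 1) + 1 = q ^ k := by rw [← hgt, hts]; ring
    have he : q ^ k - 2 = (q - 1) * (q * s) + (q - 2) := by omega
    rw [he, Nat.mul_add_div hm, Nat.div_eq_of_lt (by omega)]
    omega
  rw [h1, h2, h3, hts]
  have : (1 + q * s) * (q * s) = q * ((1 + q * s) * s) := by ring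
  rw [this, Nat.mul_div_cancel_left _ (by omega : 0 < q)]
end

section
/- Let k be odd, S a line spread of PG(k,q) invariant under a group H of order q+1 acting sharply transitively on the points of each spread line. If ℓ is a line not in S, then the q+1 lines in the H-orbit of ℓ are pairwise disjoint. -/
/-- Let `k` be odd and `S` a line spread of `PG(k,q)` invariant under a group `H` of
collineations of order `q+1` which fixes each spread line and acts sharply transitively
on the points of each spread line. If `ℓ` is a line not in `S`, then the `q+1` lines
in the `H`-orbit of `ℓ` are pairwise disjoint. -/
theorem stmt_19 (q k : ℕ) (hk : Odd k)
    (F : Type) [Field F] [Fintype F] (hq : Fintype.card F = q)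
    (S : Set (Submodule F (Fin (k+1) → F)))
    (hdim : ∀ L ∈ S, Module.finrank F L = 2)
    (hpart : ∀ v : Fin (k+1) → F, v ≠ 0 → ∃! L, L ∈ S ∧ v ∈ L)
    (H : Subgroup ((Fin (k+1) → F) ≃ₗ[F] (Fin (k+1) → F)))
    (hord : Nat.card H = q + 1)
    (hfix : ∀ g ∈ H, ∀ L ∈ S, Submodule.map (g : (Fin (k+1) → F) →ₗ[F] (Fin (k+1) → F)) L = L)
    (hsharp : ∀ L ∈ S, ∀ P Q : Submodule F (Fin (k+1) → F),
      Module.finrank F P = 1 → P ≤ L → Module.finrank F Q = 1 → Q ≤ L →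
      ∃! g : H, Submodule.map ((g : (Fin (k+1) → F) ≃ₗ[F] (Fin (k+1) → F)) :
        (Fin (k+1) → F) →ₗ[F] (Fin (k+1) → F)) P = Q)
    (l : Submodule F (Fin (k+1) → F)) (hl : Module.finrank F l = 2) (hlS : l ∉ S) :
    ∀ g h : H, g ≠ h →
      Submodule.map ((g : (Fin (k+1) → F) ≃ₗ[F] (Fin (k+1) → F)) :
          (Fin (k+1) → F) →ₗ[F] (Fin (k+1) → F)) l ⊓
        Submodule.map ((h : (Fin (k+1) → F) ≃ₗ[F] (Fin (k+1) → F)) :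
          (Fin (k+1) → F) →ₗ[F] (Fin (k+1) → F)) l = ⊥ := by

  intro g h gne
  by_contra hne
  obtain ⟨v, hv, hv0⟩ := Submodule.exists_mem_ne_zero_of_ne_bot hne
  obtain ⟨hvg, hvh⟩ := Submodule.mem_inf.mp hv
  obtain ⟨w, hwl, hgw⟩ := hvg
  obtain ⟨u, hul, hhu⟩ := hvh
  have hw0 : w ≠ 0 := by rintro rfl; simp at hgw; exact hv0 hgw.symm
  have hu0 : u ≠ 0 := by rintro rfl; simp at hhu; exact hv0 hhu.symm
  obtain ⟨L, ⟨hLS, hvL⟩, hLuniq⟩ := hpart v hv0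
  -- w ∈ L
  obtain ⟨Lw, ⟨hLwS, hwLw⟩, _⟩ := hpart w hw0
  have hvLw : v ∈ Lw := by
    rw [← hfix g g.2 Lw hLwS]
    exact ⟨w, hwLw, hgw⟩
  have hwL : w ∈ L := by rw [← hLuniq Lw ⟨hLwS, hvLw⟩]; exact hwLw
  obtain ⟨Lu, ⟨hLuS, huLu⟩, _⟩ := hpart u hu0
  have hvLu : v ∈ Lu := by
    rw [← hfix h h.2 Lu hLuS]
    exact ⟨u, huLu, hhu⟩
  have huL : u ∈ L := by rw [← hLuniq Lu ⟨hLuS, hvLu⟩]; exact huLu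
  have hgmap : Submodule.map ((g : (Fin (k+1) → F) ≃ₗ[F] (Fin (k+1) → F)) :
      (Fin (k+1) → F) →ₗ[F] (Fin (k+1) → F)) (Submodule.span F {w}) = Submodule.span F {v} := by
    rw [Submodule.map_span, Set.image_singleton]
    simp [hgw]
  have hhmap : Submodule.map ((h : (Fin (k+1) → F) ≃ₗ[F] (Fin (k+1) → F)) :
      (Fin (k+1) → F) →ₗ[F] (Fin (k+1) → F)) (Submodule.span F {u}) = Submodule.span F {v} := by
    rw [Submodule.map_span, Set.image_singleton]
    simp [hhu]
  by_cases hsp : Submodule.span F {w} = Submodule.span F {u}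
  · obtain ⟨g₀, _, huniq⟩ := hsharp L hLS (Submodule.span F {w}) (Submodule.span F {v})
      (finrank_span_singleton hw0) ((Submodule.span_singleton_le_iff_mem _ _).mpr hwL)
      (finrank_span_singleton hv0) ((Submodule.span_singleton_le_iff_mem _ _).mpr hvL)
    have h1 := huniq g hgmap
    have h2 := huniq h (by rw [hsp]; exact hhmap)
    exact gne (h1.trans h2.symm)
  · set N := Submodule.span F {w} ⊔ Submodule.span F {u} with hN
    have hlt : Submodule.span F {w} < N := by
      refine lt_of_le_of_ne le_sup_left (fun heq => hsp ?_)
      have hle : Submodule.span F {u} ≤ Submodule.span F {w} := by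
        rw [heq]; exact le_sup_right
      exact (Submodule.eq_of_le_of_finrank_le hle
        (by rw [finrank_span_singleton hw0, finrank_span_singleton hu0])).symm
    have h2lt : 1 < Module.finrank F N := by
      have := Submodule.finrank_lt_finrank_of_lt hlt
      rwa [finrank_span_singleton hw0] at this
    have hNl : N ≤ l := sup_le ((Submodule.span_singleton_le_iff_mem _ _).mpr hwl)
      ((Submodule.span_singleton_le_iff_mem _ _).mpr hul)
    have hNL : N ≤ L := sup_le ((Submodule.span_singleton_le_iff_mem _ _).mpr hwL)
      ((Submodule.span_singleton_le_iff_mem _ _).mpr huL)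
    have hlN : N = l := Submodule.eq_of_le_of_finrank_le hNl (by omega)
    have hLN : N = L := Submodule.eq_of_le_of_finrank_le hNL (by rw [hdim L hLS]; omega)
    exact hlS (hlN ▸ hLN ▸ hLS)
end
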